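/- Let ω = e^{2πi/3}, 𝒜 = [[0,0,1],[1,0,0],[0,1,0]], ℬ = [[0,1,0],[1,0,0],[0,0,1]], W = [[1, −ω, 1],[ω², 0, 0],[−1, ω, 0]], and V = [[1, −ω, 0],[ω², 0, 0],[0, 0, 1]]. Let P be a 3×3 complex matrix satisfying P = 𝒜P𝒜⁻¹·W and P = ℬ\overline{P}ℬ·V (where \overline{P} is the entrywise complex conjugate). Then P₁₁ and P₃₃ are real, 2·Re(P₁₂) = P₃₃, and P has the form P = [[P₁₁, P₁₂, P₃₃],[ω²P₁₁ + P₃₃ − P₁₂, ω(P₁₂ − P₃₃), P₃₃],[ωP₁₁ + P₁₂, ω²P₁₂ + P₃₃, P₃₃]]; in particular the entire third column of P equals (P₃₃, P₃₃, P₃₃)ᵀ. -/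
import Mathlib


/-- ω = e^{2πi/3} -/
noncomputable def ω : ℂ := Complex.exp (2 * Real.pi * Complex.I / 3)

/-- 𝒜 = [[0,0,1],[1,0,0],[0,1,0]]. -/
def Acal : Matrix (Fin 3) (Fin 3) ℂ := !![0, 0, 1; 1, 0, 0; 0, 1, 0]

/-- ℬ = [[0,1,0],[1,0,0],[0,0,1]]. -/
def Bcal : Matrix (Fin 3) (Fin 3) ℂ := !![0, 1, 0; 1, 0, 0; 0, 0, 1]

/-- W = (v₆v₁)(0). -/
noncomputable def Wmat : Matrix (Fin 3) (Fin 3) ℂ := !![1, -ω, 1; ω ^ 2, 0, 0; -1, ω, 0]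

/-- V = v₁(0). -/
noncomputable def Vmat : Matrix (Fin 3) (Fin 3) ℂ := !![1, -ω, 0; ω ^ 2, 0, 0; 0, 0, 1]

lemma hprim : IsPrimitiveRoot ω 3 := by
  have h := Complex.isPrimitiveRoot_exp 3 (by norm_num)
  have h2 : Complex.exp (2 * ↑Real.pi * Complex.I / (3:ℕ)) = ω := by
    unfold ω; norm_num
  rwa [h2] at h

lemma hω3 : ω ^ 3 = 1 := hprim.pow_eq_one

lemma hωsum : ω ^ 2 + ω + 1 = 0 := by
  have hne : ω - 1 ≠ 0 := sub_ne_zero.mpr (hprim.ne_one (by norm_num))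
  have h3 := hω3
  have h : (ω - 1) * (ω ^ 2 + ω + 1) = 0 := by linear_combination h3
  rcases mul_eq_zero.mp h with h | h
  · exact absurd h hne
  · exact h

lemma hconj : (starRingEnd ℂ) ω = ω ^ 2 := by
  have habs : ω * (starRingEnd ℂ) ω = 1 := by
    rw [Complex.mul_conj]
    norm_cast
    simp [ω, Complex.normSq_eq_norm_sq, Complex.norm_exp]
  have h3 : ω * ω ^ 2 = 1 := by linear_combination hω3
  linear_combination ω^2 * habs - (starRingEnd ℂ) ω * h3

/-- Structure of the leading coefficient 𝔪₁⁽⁰⁾ at k = 0 (Lemma 4.3): if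
`P = 𝒜P𝒜⁻¹ W` and `P = ℬ P̄ ℬ V`, then `P₁₁`, `P₃₃` are real,
`2 Re P₁₂ = P₃₃`, and `P` is determined by `P₁₁`, `P₁₂`, `P₃₃` as stated;
in particular the third column of `P` is constant equal to `P₃₃`. -/
theorem structure_m0 (P : Matrix (Fin 3) (Fin 3) ℂ)
    (hA : P = Acal * P * Acal⁻¹ * Wmat)
    (hB : P = Bcal * P.map (starRingEnd ℂ) * Bcal * Vmat) :
    (P 0 0).im = 0 ∧ (P 2 2).im = 0 ∧ ((2 * (P 0 1).re : ℝ) : ℂ) = P 2 2 ∧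
    P = !![P 0 0, P 0 1, P 2 2;
           ω ^ 2 * P 0 0 + P 2 2 - P 0 1, ω * (P 0 1 - P 2 2), P 2 2;
           ω * P 0 0 + P 0 1, ω ^ 2 * P 0 1 + P 2 2, P 2 2] := by
  have hAinv : Acal⁻¹ = !![0,1,0;0,0,1;1,0,0] := by
    apply Matrix.inv_eq_right_inv
    ext i j; fin_cases i <;> fin_cases j <;>
      simp [Acal, Matrix.mul_apply, Fin.sum_univ_three, Matrix.vecHead, Matrix.vecTail]
  rw [hAinv] at hA
  have e02 := (Matrix.ext_iff.mpr hA) 0 2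
  have e10 := (Matrix.ext_iff.mpr hA) 1 0
  have e11 := (Matrix.ext_iff.mpr hA) 1 1
  have e12 := (Matrix.ext_iff.mpr hA) 1 2
  have e20 := (Matrix.ext_iff.mpr hA) 2 0
  have e21 := (Matrix.ext_iff.mpr hA) 2 1
  have u00 := (Matrix.ext_iff.mpr hB) 0 0
  have u01 := (Matrix.ext_iff.mpr hB) 0 1
  have u22 := (Matrix.ext_iff.mpr hB) 2 2
  simp [Acal, Bcal, Wmat, Vmat, Matrix.mul_apply, Fin.sum_univ_three, Matrix.vecMul,
    dotProduct, Matrix.map_apply, Matrix.vecHead,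
    Matrix.vecTail] at e02 e10 e11 e12 e20 e21 u00 u01 u22
  -- e02 : P 0 2 = P 2 2
  -- e10 : P 1 0 = P 0 2 + P 0 0 * ω ^ 2 + -P 0 1
  -- e11 : P 1 1 = -(P 0 2 * ω) + P 0 1 * ω
  -- e12 : P 1 2 = P 0 2
  -- e20 : P 2 0 = P 1 2 + P 1 0 * ω ^ 2 + -P 1 1
  -- e21 : P 2 1 = -(P 1 2 * ω) + P 1 1 * ω
  -- u00 : P 0 0 = conj (P 1 1) + conj (P 1 0) * ω ^ 2
  -- u01 : P 0 1 = -(conj (P 1 1) * ω)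
  -- u22 : P 2 2 = conj (P 2 2)
  have h12 : P 1 2 = P 2 2 := e12.trans e02
  have h10 : P 1 0 = ω ^ 2 * P 0 0 + P 2 2 - P 0 1 := by
    linear_combination e10 + e02
  have h11 : P 1 1 = ω * (P 0 1 - P 2 2) := by
    linear_combination e11 - ω * e02
  have h20 : P 2 0 = ω * P 0 0 + P 0 1 := by
    linear_combination e20 + ω ^ 2 * h10 - h11 + h12 + ω * P 0 0 * hω3 +
      (P 2 2 - P 0 1) * hωsum
  have h21 : P 2 1 = ω ^ 2 * P 0 1 + P 2 2 := by
    linear_combination e21 + ω * h11 - ω * h12 - P 2 2 * hωsum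
  -- conjugated equations
  have c10 := congrArg (starRingEnd ℂ) h10
  have c11 := congrArg (starRingEnd ℂ) h11
  simp only [map_add, map_sub, map_mul, map_pow, hconj] at c10 c11
  have hcc : (starRingEnd ℂ) (P 2 2) = P 2 2 := u22.symm
  have h00c : (starRingEnd ℂ) (P 0 0) = P 0 0 := by
    linear_combination -u00 - c11 - ω ^ 2 * c10 -
      ((ω ^ 3 + 1) * (starRingEnd ℂ) (P 0 0)) * hω3
  have h01c : P 0 1 + (starRingEnd ℂ) (P 0 1) = P 2 2 := by
    linear_combination u01 - ω * c11 + (P 2 2 - (starRingEnd ℂ) (P 0 1)) * hω3 + ω ^ 3 * hcc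
  refine ⟨Complex.conj_eq_iff_im.mp h00c, Complex.conj_eq_iff_im.mp hcc, ?_, ?_⟩
  · calc ((2 * (P 0 1).re : ℝ) : ℂ) = P 0 1 + (starRingEnd ℂ) (P 0 1) :=
          (Complex.add_conj _).symm
      _ = P 2 2 := h01c
  · ext i j
    fin_cases i <;> fin_cases j <;>
      simp [Matrix.vecHead, Matrix.vecTail]
    · exact e02
    · exact h10
    · exact h11
    · exact h12
    · exact h20
    · exact h21
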